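/- Suppose an execution of the simplex method with the highest-gain pivoting rule on a deterministic MDP with nonuniform discounts moves from policy π to policy π' by updating the action at state s, and this creates a new cycle C containing s whose discount is dominated by γ_a for some action a in π'. Let π'' be the last policy of the execution in which s lies on a cycle whose discount is dominated by γ_a. Then v^{π''}_s − v^{π'}_s ≤ (1 − 1/n²)·(v^{π''}_s − v^π_s). -/

import Mathlib

open Finset

/-- A deterministic Markov decision process: each action `a` is usable in the
single state `src a`, gives reward `r a`, and moves deterministically to `tgt a`.
Every state has at least one usable action. -/
structure DetMDP (S A : Type) where
  src : A → S
  tgt : A → S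
  r : A → ℝ
  exists_action : ∀ s : S, ∃ a : A, src a = s

namespace DetMDP

variable {S A : Type} [Fintype S] [Fintype A] [DecidableEq S] [DecidableEq A]
variable (M : DetMDP S A)

/-- `π : S → A` is a policy if it assigns to each state an action usable there. -/
def IsPolicy (π : S → A) : Prop := ∀ s : S, M.src (π s) = s

/-- The next-state map of a policy. -/
def step (π : S → A) (s : S) : S := M.tgt (π s)

/-- `v` is the value vector of policy `π` with nonuniform discounts `γ : A → ℝ`:
the unique solution of `v = r_π + (G^π)ᵀ v`, stated pointwise. -/
def IsValue (γ : A → ℝ) (π : S → A) (v : S → ℝ) : Prop :=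
  ∀ s : S, v s = M.r (π s) + γ (π s) * v (M.tgt (π s))

/-- The gain (reduced cost) of action `a` with respect to a value vector `v`. -/
def gain (γ : A → ℝ) (v : S → ℝ) (a : A) : ℝ :=
  M.r a + γ a * v (M.tgt a) - v (M.src a)

/-- `x` is the single-source flux vector `x^{π,s0}` of policy `π` for the source
state `s0`: it vanishes off the policy and satisfies the flux equations of the
single-source primal LP. -/
def IsFluxFrom (γ : A → ℝ) (π : S → A) (s0 : S) (x : A → ℝ) : Prop :=
  (∀ a : A, a ≠ π (M.src a) → x a = 0) ∧
  ∀ s : S, (∑ a ∈ univ.filter fun a => M.src a = s, x a)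
      = (if s = s0 then 1 else 0) +
        ∑ a ∈ univ.filter fun a => M.tgt a = s, γ a * x a

/-- `C` is (the action set of) a cycle of the policy `π`. -/
def IsCycleOf (π : S → A) (C : Finset A) : Prop :=
  ∃ s : S, (∃ k ∈ Finset.Icc 1 (Fintype.card S), (M.step π)^[k] s = s) ∧
    C = (Finset.range (Fintype.card S)).image fun i => π ((M.step π)^[i] s)

/-- One pivot of the simplex method with the highest-gain rule: switch to the
action of (strictly positive) maximal gain. -/
def SimplexPivot (γ : A → ℝ) (π π' : S → A) : Prop :=
  ∃ (v : S → ℝ) (a : A), M.IsValue γ π v ∧ 0 < M.gain γ v a ∧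
    (∀ b : A, M.gain γ v b ≤ M.gain γ v a) ∧ π' = Function.update π (M.src a) a

/-- A policy is terminal if all gains are nonpositive. -/
def IsTerminal (γ : A → ℝ) (π : S → A) : Prop :=
  ∃ v : S → ℝ, M.IsValue γ π v ∧ ∀ a : A, M.gain γ v a ≤ 0

/-- An execution of the simplex method with the highest-gain pivoting rule:
at every time step either a pivot occurs, or the current policy is terminal
(and the sequence stays constant). -/
def IsExecution (γ : A → ℝ) (seq : ℕ → S → A) : Prop :=
  (∀ t : ℕ, M.IsPolicy (seq t)) ∧
  ∀ t : ℕ, M.SimplexPivot γ (seq t) (seq (t + 1)) ∨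
    (M.IsTerminal γ (seq t) ∧ seq (t + 1) = seq t)

/-- Iteration `t` of the execution creates a new cycle. -/
def NewCycleAt (seq : ℕ → S → A) (t : ℕ) : Prop :=
  ∃ C : Finset A, M.IsCycleOf (seq (t + 1)) C ∧ ¬ M.IsCycleOf (seq t) C

/-- State `s` lies on a cycle of `π` whose discount is dominated by `γ_a`. -/
def OnDomCycle (γ : A → ℝ) (π : S → A) (s : S) (a : A) : Prop :=
  ∃ C : Finset A, M.IsCycleOf π C ∧ π s ∈ C ∧ a ∈ C ∧ ∀ b ∈ C, γ a ≤ γ b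

end DetMDP

/-!
Let `v` be the value of `π`, `g > 0` the highest gain, attained by `π'(s)`, and put
`c := γ_a`. Going once around a cycle of a policy `σ` through `s` telescopes
`w_s − v_s` (for `w` the value of `σ`) into the discounted sum of the gains, relative
to `v`, of the actions of the cycle: `(1 − γ_cycle) (w_s − v_s) = Σ_i (∏_{j<i} γ_j) gain_i`.

On the new cycle of `π'` the only nonzero gain is `g`, at `s`, and `γ_C ≥ c^n`, so
`g ≤ (1 − c^n) (v'_s − v_s) ≤ n (1 − c) (v'_s − v_s)`. On the cycle of `π''` through `s`
and `a` every gain is at most `g` and `γ_cycle ≤ c`, so `(1 − c) (v''_s − v_s) ≤ n g`.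
Together `v''_s − v_s ≤ n² (v'_s − v_s)`, which rearranges to the claim.
-/

open Finset Function

namespace DetMDP

variable {S A : Type} {M : DetMDP S A} {γ : A → ℝ}

theorem IsValue.unique [Finite S] (h0 : ∀ a, 0 ≤ γ a) (h1 : ∀ a, γ a < 1) {π : S → A}
    {v w : S → ℝ} (hv : M.IsValue γ π v) (hw : M.IsValue γ π w) : v = w := by
  funext s
  have : Nonempty S := ⟨s⟩
  obtain ⟨s₁, hmax⟩ := Finite.exists_max fun s => |v s - w s|
  have hcontract : |v s₁ - w s₁| ≤ γ (π s₁) * |v s₁ - w s₁| := calc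
    |v s₁ - w s₁| = γ (π s₁) * |v (M.tgt (π s₁)) - w (M.tgt (π s₁))| := by
      rw [hv s₁, hw s₁, add_sub_add_left_eq_sub, ← mul_sub, abs_mul, abs_of_nonneg (h0 _)]
    _ ≤ γ (π s₁) * |v s₁ - w s₁| := mul_le_mul_of_nonneg_left (hmax _) (h0 _)
  have hzero : |v s₁ - w s₁| ≤ 0 := by nlinarith [abs_nonneg (v s₁ - w s₁), h1 (π s₁)]
  have := hmax s
  rw [← sub_eq_zero, ← abs_nonpos_iff]
  linarith

theorem IsValue.gain_eq_zero {π : S → A} {v : S → ℝ} (hπ : M.IsPolicy π)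
    (hv : M.IsValue γ π v) (u : S) : M.gain γ v (π u) = 0 := by
  rw [gain, hπ u, ← hv u, sub_self]

theorem IsCycleOf.exists_isPeriodicPt [Fintype S] [DecidableEq A] {π : S → A}
    (hπ : M.IsPolicy π) {C : Finset A} (hC : M.IsCycleOf π C) {s : S} (hs : π s ∈ C) :
    ∃ k, 0 < k ∧ k ≤ Fintype.card S ∧ IsPeriodicPt (M.step π) k s ∧
      (∀ j, π ((M.step π)^[j] s) ∈ C) ∧ ∀ b ∈ C, ∃ j < k, π ((M.step π)^[j] s) = b := by
  obtain ⟨s₀, ⟨k, hk, hper⟩, rfl⟩ := hC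
  obtain ⟨hk0, hkn⟩ := mem_Icc.1 hk
  replace hper : IsPeriodicPt (M.step π) k s₀ := hper
  obtain ⟨i, -, hi⟩ := mem_image.1 hs
  obtain rfl : (M.step π)^[i] s₀ = s := by rw [← hπ s, ← hi, hπ]
  refine ⟨k, hk0, hkn, hper.apply_iterate i, fun j => ?_, fun b hb => ?_⟩
  · rw [← iterate_add_apply, ← hper.iterate_mod_apply]
    exact mem_image_of_mem _ (mem_range.2 ((Nat.mod_lt _ hk0).trans_le hkn))
  · obtain ⟨j, -, rfl⟩ := mem_image.1 hb
    -- `k * i - i` more steps lead from `f^[i] s₀` back to `s₀`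
    refine ⟨(j + (k * i - i)) % k, Nat.mod_lt _ hk0, ?_⟩
    rw [(hper.apply_iterate i).iterate_mod_apply, iterate_add_apply,
      ← iterate_add_apply (M.step π) (k * i - i) i,
      Nat.sub_add_cancel (Nat.le_mul_of_pos_left i hk0), (hper.mul_const i).eq]

theorem IsExecution.pivot_of_ne [Finite S] [DecidableEq S] (h0 : ∀ a, 0 ≤ γ a)
    (h1 : ∀ a, γ a < 1) {seq : ℕ → S → A} (hexec : M.IsExecution γ seq) {t : ℕ} {s : S}
    (hchange : seq (t + 1) s ≠ seq t s) {v : S → ℝ} (hv : M.IsValue γ (seq t) v) :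
    seq (t + 1) = update (seq t) s (seq (t + 1) s) ∧ 0 < M.gain γ v (seq (t + 1) s) ∧
      ∀ b, M.gain γ v b ≤ M.gain γ v (seq (t + 1) s) := by
  obtain ⟨w, b, hw, hpos, hmax, hupd⟩ : M.SimplexPivot γ (seq t) (seq (t + 1)) :=
    (hexec.2 t).resolve_right fun ⟨_, h⟩ => hchange (congrFun h s)
  obtain rfl := hw.unique h0 h1 hv
  obtain rfl : M.src b = s := by
    by_contra hne
    exact hchange (by rw [hupd, update_of_ne (Ne.symm hne)])
  have hb : seq (t + 1) (M.src b) = b := by rw [hupd, update_self]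
  rw [hb]
  exact ⟨hupd, hpos, hmax⟩

variable (M γ) (π : S → A)

def pathDiscount (s : S) (k : ℕ) : ℝ :=
  ∏ j ∈ range k, γ (π ((M.step π)^[j] s))

def pathGain (v : S → ℝ) (s : S) (k : ℕ) : ℝ :=
  ∑ i ∈ range k, M.pathDiscount γ π s i * M.gain γ v (π ((M.step π)^[i] s))

variable {γ π}

theorem value_sub_eq_pathGain_add {w : S → ℝ} (hπ : M.IsPolicy π) (hw : M.IsValue γ π w)
    (v : S → ℝ) (s : S) (k : ℕ) :
    w s - v s = M.pathGain γ π v s k +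
      M.pathDiscount γ π s k * (w ((M.step π)^[k] s) - v ((M.step π)^[k] s)) := by
  induction k with
  | zero => simp [pathGain, pathDiscount]
  | succ k ih =>
    simp only [pathGain, pathDiscount, sum_range_succ, prod_range_succ,
      iterate_succ_apply'] at ih ⊢
    rw [ih, step, gain, hπ, hw ((M.step π)^[k] s)]
    ring

theorem one_sub_pathDiscount_mul {w : S → ℝ} (hπ : M.IsPolicy π) (hw : M.IsValue γ π w)
    (v : S → ℝ) {s : S} {k : ℕ} (hs : IsPeriodicPt (M.step π) k s) :
    (1 - M.pathDiscount γ π s k) * (w s - v s) = M.pathGain γ π v s k := by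
  have h := M.value_sub_eq_pathGain_add hπ hw v s k
  rw [hs.eq] at h
  linear_combination h

theorem pow_le_pathDiscount {c : ℝ} (hc : 0 ≤ c) {s : S} {k : ℕ}
    (hle : ∀ j < k, c ≤ γ (π ((M.step π)^[j] s))) : c ^ k ≤ M.pathDiscount γ π s k :=
  calc c ^ k = ∏ _j ∈ range k, c := by rw [prod_const, card_range]
    _ ≤ M.pathDiscount γ π s k :=
      prod_le_prod (fun _ _ => hc) fun j hj => hle j (mem_range.1 hj)

variable (h0 : ∀ a, 0 ≤ γ a) (h1 : ∀ a, γ a ≤ 1)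
include h0

theorem pathDiscount_nonneg (s : S) (k : ℕ) : 0 ≤ M.pathDiscount γ π s k :=
  prod_nonneg fun _ _ => h0 _

include h1 in
theorem pathDiscount_le_one (s : S) (k : ℕ) : M.pathDiscount γ π s k ≤ 1 :=
  prod_le_one (fun _ _ => h0 _) fun _ _ => h1 _

include h1 in
theorem pathDiscount_le_of_lt {s : S} {j k : ℕ} (hj : j < k) :
    M.pathDiscount γ π s k ≤ γ (π ((M.step π)^[j] s)) := by
  rw [pathDiscount, ← mul_prod_erase _ _ (mem_range.2 hj)]
  exact mul_le_of_le_one_right (h0 _) (prod_le_one (fun _ _ => h0 _) fun _ _ => h1 _)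

include h1 in
theorem pathGain_le {v : S → ℝ} {s : S} {k : ℕ} {g : ℝ} (hg : 0 ≤ g)
    (hle : ∀ i < k, M.gain γ v (π ((M.step π)^[i] s)) ≤ g) : M.pathGain γ π v s k ≤ k * g := by
  calc M.pathGain γ π v s k ≤ ∑ _i ∈ range k, g := sum_le_sum fun i hi =>
        (mul_le_mul_of_nonneg_left (hle i (mem_range.1 hi)) (M.pathDiscount_nonneg h0 s i)).trans
          (mul_le_of_le_one_left hg (M.pathDiscount_le_one h0 h1 s i))
    _ = k * g := by rw [sum_const, card_range, nsmul_eq_mul]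

theorem gain_le_pathGain {v : S → ℝ} {s : S} {k : ℕ} (hk : 0 < k)
    (hnonneg : ∀ i < k, 0 ≤ M.gain γ v (π ((M.step π)^[i] s))) :
    M.gain γ v (π s) ≤ M.pathGain γ π v s k := by
  have hterm := single_le_sum (f := fun i => M.pathDiscount γ π s i * M.gain γ v
    (π ((M.step π)^[i] s))) (fun i hi => mul_nonneg (M.pathDiscount_nonneg h0 s i)
    (hnonneg i (mem_range.1 hi))) (mem_range.2 hk)
  simpa [pathGain, pathDiscount] using hterm

variable [Fintype S] [DecidableEq A]
include h1

theorem one_sub_mul_value_sub_le {σ : S → A} {v w : S → ℝ} (hσ : M.IsPolicy σ)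
    (hw : M.IsValue γ σ w) {s : S} {C : Finset A} (hC : M.IsCycleOf σ C) (hsC : σ s ∈ C)
    {b : A} (hbC : b ∈ C) {g : ℝ} (hg : 0 ≤ g) (hmax : ∀ a, M.gain γ v a ≤ g) :
    (1 - γ b) * (w s - v s) ≤ Fintype.card S * g := by
  obtain ⟨k, -, hkn, hper, -, hsurj⟩ := hC.exists_isPeriodicPt hσ hsC
  obtain ⟨j, hjk, rfl⟩ := hsurj b hbC
  rcases le_or_gt (w s - v s) 0 with hX | hX
  · exact (mul_nonpos_of_nonneg_of_nonpos (by linarith [h1 (σ ((M.step σ)^[j] s))]) hX).trans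
      (by positivity)
  calc (1 - γ (σ ((M.step σ)^[j] s))) * (w s - v s)
      ≤ (1 - M.pathDiscount γ σ s k) * (w s - v s) := by
        gcongr
        exact M.pathDiscount_le_of_lt h0 h1 hjk
    _ = M.pathGain γ σ v s k := M.one_sub_pathDiscount_mul hσ hw v hper
    _ ≤ k * g := M.pathGain_le h0 h1 hg fun i _ => hmax _
    _ ≤ Fintype.card S * g := by gcongr

variable [DecidableEq S]

theorem gain_le_card_mul_value_sub {π π' : S → A} {v v' : S → ℝ} (hπ : M.IsPolicy π)
    (hπ' : M.IsPolicy π') (hv : M.IsValue γ π v) (hv' : M.IsValue γ π' v') {s : S}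
    (hupd : π' = update π s (π' s)) (hpos : 0 < M.gain γ v (π' s)) {C : Finset A}
    (hC : M.IsCycleOf π' C) (hsC : π' s ∈ C) {c : ℝ} (hc : 0 ≤ c) (hdom : ∀ b ∈ C, c ≤ γ b) :
    M.gain γ v (π' s) ≤ Fintype.card S * (1 - c) * (v' s - v s) := by
  obtain ⟨k, hk0, hkn, hper, hmem, -⟩ := hC.exists_isPeriodicPt hπ' hsC
  have hnonneg : ∀ i < k, 0 ≤ M.gain γ v (π' ((M.step π')^[i] s)) := by
    intro i _
    by_cases hi : (M.step π')^[i] s = s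
    · rw [hi]
      exact hpos.le
    · rw [congrFun hupd, update_of_ne hi, hv.gain_eq_zero hπ]
  have hgain : M.gain γ v (π' s) ≤ (1 - M.pathDiscount γ π' s k) * (v' s - v s) :=
    (M.gain_le_pathGain h0 hk0 hnonneg).trans_eq (M.one_sub_pathDiscount_mul hπ' hv' v hper).symm
  have hc1 : c ≤ 1 := (hdom _ hsC).trans (h1 _)
  have hdisc : 1 + k * (c - 1) ≤ M.pathDiscount γ π' s k :=
    (one_add_mul_sub_le_pow (by linarith) k).trans
      (M.pow_le_pathDiscount hc fun j _ => hdom _ (hmem j))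
  have hY : 0 < v' s - v s := pos_of_mul_pos_right (hpos.trans_le hgain)
    (sub_nonneg.2 (M.pathDiscount_le_one h0 h1 s k))
  calc M.gain γ v (π' s) ≤ (1 - M.pathDiscount γ π' s k) * (v' s - v s) := hgain
    _ ≤ k * (1 - c) * (v' s - v s) := mul_le_mul_of_nonneg_right (by linarith) hY.le
    _ ≤ Fintype.card S * (1 - c) * (v' s - v s) := by gcongr

end DetMDP

theorem sub_le_one_sub_one_div_sq_mul {n c g X Y : ℝ} (hn : 0 < n) (hc : c < 1)
    (hlow : g ≤ n * (1 - c) * Y) (hup : (1 - c) * X ≤ n * g) :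
    X - Y ≤ (1 - 1 / n ^ 2) * X := by
  have hXY : X ≤ n ^ 2 * Y := le_of_mul_le_mul_left
    (by nlinarith [mul_le_mul_of_nonneg_left hlow hn.le]) (sub_pos.2 hc)
  have : X / n ^ 2 ≤ Y := by
    rw [div_le_iff₀ (by positivity)]
    linarith
  calc X - Y ≤ X - X / n ^ 2 := by linarith
    _ = (1 - 1 / n ^ 2) * X := by ring

theorem cycle_value_contraction_nonuniform_general
    {S A : Type} [Fintype S] [DecidableEq S] [DecidableEq A]
    (M : DetMDP S A) (γ : A → ℝ) (hγ : ∀ a : A, 0 ≤ γ a ∧ γ a < 1)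
    (seq : ℕ → S → A) (hexec : M.IsExecution γ seq)
    (t t'' : ℕ) (s : S) (a : A) (C : Finset A)
    -- the iteration from `seq t` to `seq (t+1)` updates the action at state `s`
    (hchange : seq (t + 1) s ≠ seq t s)
    -- and creates the new cycle `C` containing `s`, dominated by `γ_a` with `a` in `seq (t+1)`
    (hCnew : M.IsCycleOf (seq (t + 1)) C)
    (hsC : seq (t + 1) s ∈ C) (hdom : ∀ b ∈ C, γ a ≤ γ b)
    -- `seq t''` is the last policy of the execution where `s` is on a cycle dominated by `γ_a`
    (hlast : M.OnDomCycle γ (seq t'') s a)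
    (v v' v'' : S → ℝ)
    (hv : M.IsValue γ (seq t) v) (hv' : M.IsValue γ (seq (t + 1)) v')
    (hv'' : M.IsValue γ (seq t'') v'') :
    v'' s - v' s ≤ (1 - 1 / (Fintype.card S : ℝ) ^ 2) * (v'' s - v s) := by
  have hγ0 : ∀ b, 0 ≤ γ b := fun b => (hγ b).1
  have hγ1 : ∀ b, γ b < 1 := fun b => (hγ b).2
  obtain ⟨hupd, hpos, hmax⟩ := hexec.pivot_of_ne hγ0 hγ1 hchange hv
  have hnew := M.gain_le_card_mul_value_sub hγ0 (fun b => (hγ1 b).le) (hexec.1 t)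
    (hexec.1 (t + 1)) hv hv' hupd hpos hCnew hsC (hγ0 a) hdom
  obtain ⟨C'', hC'', hsC'', haC'', -⟩ := hlast
  have hold := M.one_sub_mul_value_sub_le hγ0 (fun b => (hγ1 b).le) (hexec.1 t'') hv'' hC''
    hsC'' haC'' hpos.le hmax
  have := sub_le_one_sub_one_div_sq_mul (Nat.cast_pos.2 (Fintype.card_pos_iff.2 ⟨s⟩))
    (hγ1 a) hnew hold
  rwa [sub_sub_sub_cancel_right] at this

/-- Suppose the execution moves from `π = seq t` to
`π' = seq (t+1)` by updating the action at state `s`, creating a new cycle `C`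
containing `s` whose discount is dominated by `γ_a`. Let `π'' = seq t''` be the
last policy of the execution in which `s` lies on a cycle dominated by `γ_a`.
Then `v^{π''}_s − v^{π'}_s ≤ (1 − 1/n²)·(v^{π''}_s − v^π_s)`. -/
theorem cycle_value_contraction_nonuniform
    {S A : Type} [Fintype S] [Fintype A] [DecidableEq S] [DecidableEq A]
    (M : DetMDP S A) (γ : A → ℝ) (hγ : ∀ a : A, 0 ≤ γ a ∧ γ a < 1)
    (seq : ℕ → S → A) (hexec : M.IsExecution γ seq)
    (t t'' : ℕ) (s : S) (a : A) (C : Finset A)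
    -- the iteration from `seq t` to `seq (t+1)` updates the action at state `s`
    (hupd : seq (t + 1) = Function.update (seq t) s (seq (t + 1) s))
    (hchange : seq (t + 1) s ≠ seq t s)
    -- and creates the new cycle `C` containing `s`, dominated by `γ_a` with `a` in `seq (t+1)`
    (hCnew : M.IsCycleOf (seq (t + 1)) C) (hCold : ¬ M.IsCycleOf (seq t) C)
    (hsC : seq (t + 1) s ∈ C) (haC : a ∈ C) (hdom : ∀ b ∈ C, γ a ≤ γ b)
    -- `seq t''` is the last policy of the execution where `s` is on a cycle dominated by `γ_a`
    (hlast : M.OnDomCycle γ (seq t'') s a)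
    (hlast' : ∀ u : ℕ, t'' < u → ¬ M.OnDomCycle γ (seq u) s a)
    (v v' v'' : S → ℝ)
    (hv : M.IsValue γ (seq t) v) (hv' : M.IsValue γ (seq (t + 1)) v')
    (hv'' : M.IsValue γ (seq t'') v'') :
    v'' s - v' s ≤ (1 - 1 / (Fintype.card S : ℝ) ^ 2) * (v'' s - v s) :=
  cycle_value_contraction_nonuniform_general M γ hγ seq hexec t t'' s a C hchange hCnew hsC hdom
    hlast v v' v'' hv hv' hv''
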